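/- Let Σ be a signature and M a Σ-Nmatrix. Then Thm(Σ, ⊢_M) ≠ ∅ if and only if the tilded Nmatrix M̃ and the unconstrained Nmatrix U_Σ are not equivalent (i.e. ⊢_{M̃} ≠ ⊢_{U_Σ}). -/

import Mathlib

structure Signature where
  Conn : Type
  arity : Conn → ℕ

inductive Fm (S : Signature) : Type where
  | var : ℕ → Fm S
  | app : (c : S.Conn) → (Fin (S.arity c) → Fm S) → Fm S

def Fm.subst {S : Signature} (σ : ℕ → Fm S) : Fm S → Fm S
  | .var i => σ i
  | .app c args => .app c (fun j => (args j).subst σ)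

def Fm.varsLT {S : Signature} (n : ℕ) : Fm S → Prop
  | .var i => i < n
  | .app _ args => ∀ j, (args j).varsLT n

structure NMatrix (S : Signature) (V : Type) where
  D : Set V
  interp : (c : S.Conn) → (Fin (S.arity c) → V) → Set V
  interp_nonempty : ∀ c args, (interp c args).Nonempty

def IsVal {S : Signature} {V : Type} (M : NMatrix S V) (v : Fm S → V) : Prop :=
  ∀ (c : S.Conn) (args : Fin (S.arity c) → Fm S),
    v (Fm.app c args) ∈ M.interp c (fun i => v (args i))

def Entails {S : Signature} {V : Type} (M : NMatrix S V) (Γ : Set (Fm S)) (A : Fm S) : Prop :=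
  ∀ v, IsVal M v → (∀ B ∈ Γ, v B ∈ M.D) → v A ∈ M.D

def Interderiv {S : Signature} {V : Type} (M : NMatrix S V) (A B : Fm S) : Prop :=
  Entails M {A} B ∧ Entails M {B} A

def Deterministic {S : Signature} {V : Type} (M : NMatrix S V) : Prop :=
  ∀ c args, ∃ x, M.interp c args = {x}

/-- The tilde-forgetful function: collapses the fresh designated copy x̃ of each
undesignated value x back to x. -/
def uForget {S : Signature} {V : Type} (M : NMatrix S V) :
    V ⊕ {x : V // x ∉ M.D} → V :=
  Sum.elim id Subtype.val

/-- The tilded Nmatrix M̃: add a fresh designated copy x̃ of each undesignated value x,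
interpreting each connective by ©_{M̃}(x₁,…,x_k) = u⁻¹(©_M(u(x₁),…,u(x_k))). -/
def tilded {S : Signature} {V : Type} (M : NMatrix S V) :
    NMatrix S (V ⊕ {x : V // x ∉ M.D}) where
  D := { y | Sum.elim (fun x => x ∈ M.D) (fun _ => True) y }
  interp := fun c args => uForget M ⁻¹' (M.interp c (fun i => uForget M (args i)))
  interp_nonempty := by
    intro c args
    obtain ⟨x, hx⟩ := M.interp_nonempty c (fun i => uForget M (args i))
    exact ⟨Sum.inl x, hx⟩

/-- The unconstrained Σ-Nmatrix U_Σ: two values 0 = false, 1 = true, with 1 designated, and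
every connective interpreted by the constant multifunction {0, 1}. -/
def unconstrained (S : Signature) : NMatrix S Bool where
  D := {true}
  interp := fun _ _ => Set.univ
  interp_nonempty := fun _ _ => ⟨true, trivial⟩


/-!
U_Σ only validates the reflexive consequences `A ∈ Γ`. The tilded Nmatrix validates exactly
those together with the theorems of M: a valuation of M̃ is a valuation of M whose values on
the premisses may be replaced by their designated copies, so every counter-model of `A` in M
becomes a counter-model of `Γ ⊢ A` in M̃ whenever `A ∉ Γ`.
-/

section Tilded

variable {S : Signature} {V : Type} (M : NMatrix S V)

theorem entails_unconstrained_iff (Γ : Set (Fm S)) (A : Fm S) :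
    Entails (unconstrained S) Γ A ↔ A ∈ Γ := by
  classical
  refine ⟨fun h => ?_, fun hA v _ hΓ => hΓ A hA⟩
  have := h (fun B => decide (B ∈ Γ)) (fun _ _ => trivial) fun B hB => by
    simp [unconstrained, hB]
  simpa [unconstrained] using this

theorem isVal_tilded_iff (w : Fm S → V ⊕ {x : V // x ∉ M.D}) :
    IsVal (tilded M) w ↔ IsVal M (uForget M ∘ w) :=
  Iff.rfl

theorem inl_mem_tilded_D_iff (x : V) :
    (Sum.inl x : V ⊕ {x : V // x ∉ M.D}) ∈ (tilded M).D ↔ x ∈ M.D :=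
  Iff.rfl

theorem mem_tilded_D_of_uForget_mem {y : V ⊕ {x : V // x ∉ M.D}} (hy : uForget M y ∈ M.D) :
    y ∈ (tilded M).D := by
  cases y with
  | inl x => exact hy
  | inr _ => trivial

noncomputable def designatedLift (x : V) : V ⊕ {x : V // x ∉ M.D} :=
  open Classical in if h : x ∈ M.D then Sum.inl x else Sum.inr ⟨x, h⟩

theorem uForget_designatedLift (x : V) : uForget M (designatedLift M x) = x := by
  unfold designatedLift
  split <;> rfl

theorem designatedLift_mem_tilded_D (x : V) : designatedLift M x ∈ (tilded M).D := by
  unfold designatedLift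
  split
  · assumption
  · trivial

theorem entails_tilded_of_entails_empty {A : Fm S} (hA : Entails M ∅ A) (Γ : Set (Fm S)) :
    Entails (tilded M) Γ A := fun w hw _ =>
  mem_tilded_D_of_uForget_mem M (hA _ ((isVal_tilded_iff M w).mp hw) fun _ h => h.elim)

theorem entails_empty_of_entails_tilded {Γ : Set (Fm S)} {A : Fm S}
    (h : Entails (tilded M) Γ A) (hA : A ∉ Γ) : Entails M ∅ A := by
  classical
  intro v hv _
  let w : Fm S → V ⊕ {x : V // x ∉ M.D} := fun B =>
    if B ∈ Γ then designatedLift M (v B) else Sum.inl (v B)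
  have hforget : uForget M ∘ w = v := by
    funext B
    by_cases hB : B ∈ Γ
    · simp only [Function.comp_apply, w, if_pos hB, uForget_designatedLift]
    · simp only [Function.comp_apply, w, if_neg hB]
      rfl
  have hwA : w A = Sum.inl (v A) := if_neg hA
  have := h w ((isVal_tilded_iff M w).mpr (hforget ▸ hv)) fun B hB => by
    simp only [w, if_pos hB]
    exact designatedLift_mem_tilded_D M (v B)
  rwa [hwA, inl_mem_tilded_D_iff] at this

theorem entails_tilded_iff (Γ : Set (Fm S)) (A : Fm S) :
    Entails (tilded M) Γ A ↔ A ∈ Γ ∨ Entails M ∅ A := by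
  refine ⟨fun h => or_iff_not_imp_left.mpr (entails_empty_of_entails_tilded M h), ?_⟩
  rintro (hA | hA)
  · exact fun _ _ hΓ => hΓ A hA
  · exact entails_tilded_of_entails_empty M hA Γ

end Tilded

/-- The logic of M has some theorem if and only if the tilded Nmatrix M̃ and
the unconstrained Nmatrix U_Σ are not equivalent (do not induce the same consequence
relation). -/
theorem stmt_12 {S : Signature} {V : Type} (M : NMatrix S V) :
    (∃ A : Fm S, Entails M ∅ A) ↔
      ¬ (∀ (Γ : Set (Fm S)) (A : Fm S),
          Entails (tilded M) Γ A ↔ Entails (unconstrained S) Γ A) := by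
  simp only [entails_tilded_iff, entails_unconstrained_iff]
  constructor
  · rintro ⟨A, hA⟩ h
    simpa using (h ∅ A).mp (Or.inr hA)
  · intro h
    by_contra! hno
    exact h fun Γ A => by simp [hno A]
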